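/- Let T(u) = ∑_{m≥0} 2·(10m+5)!!/((2m+1)!!)⁵ · u^{2m+1} ∈ ℚ[[u]] and let θ = (1/2)·u·d/du. Then T satisfies the inhomogeneous Picard–Fuchs equation θ⁴T − 5u²(5θ+1)(5θ+2)(5θ+3)(5θ+4)T = (15/8)·u. -/

import Mathlib

/-- The operator `θ = (1/2)·u·d/du` on formal power series over `ℚ`: `(θ f)ₙ = (n/2)·fₙ`. -/
noncomputable def theta (f : PowerSeries ℚ) : PowerSeries ℚ :=
  PowerSeries.mk fun n => ((n : ℚ) / 2) * PowerSeries.coeff (R := ℚ) n f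

/-- Walcher's disk potential `T(u) = ∑_{m ≥ 0} 2·(10m+5)!!/((2m+1)!!)⁵ · u^{2m+1}`
(for odd `n = 2m+1` one has `10m+5 = 5n` and `(2m+1)!! = n!!`). -/
noncomputable def T : PowerSeries ℚ :=
  PowerSeries.mk fun n =>
    if n % 2 = 1 then
      2 * (Nat.doubleFactorial (5 * n) : ℚ) / (Nat.doubleFactorial n : ℚ) ^ 5
    else 0

/-- The operator `5θ + a`. -/
noncomputable def A (a : ℚ) (f : PowerSeries ℚ) : PowerSeries ℚ :=
  (5 : ℚ) • theta f + a • f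

/-!
Since `θ` and `5θ + a` act diagonally on monomials, the equation says coefficientwise that the
coefficients `tₙ` of `T` satisfy `(n+2)⁴ tₙ₊₂ = 5 (5n+2)(5n+4)(5n+6)(5n+8) tₙ`, which is the ratio of
consecutive double-factorial terms, while the `u¹` coefficient gives `(1/2)⁴ · 2 · 5!! = 15/8`.
-/

open PowerSeries
open scoped Nat

@[simp]
lemma coeff_theta (f : ℚ⟦X⟧) (n : ℕ) : coeff n (theta f) = (n / 2 : ℚ) * coeff n f := by
  simp [theta]

@[simp]
lemma coeff_A (a : ℚ) (f : ℚ⟦X⟧) (n : ℕ) :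
    coeff n (A a f) = (5 * (n / 2 : ℚ) + a) * coeff n f := by
  simp only [A, map_add, map_smul, coeff_theta, smul_eq_mul]
  ring

lemma Nat.doubleFactorial_five_mul_add_two (k : ℕ) :
    (5 * (k + 2))‼ =
      (5 * k + 10) * (5 * k + 8) * (5 * k + 6) * (5 * k + 4) * (5 * k + 2) * (5 * k)‼ := by
  rw [show 5 * (k + 2) = 5 * k + 2 + 2 + 2 + 2 + 2 by ring]
  simp only [Nat.doubleFactorial_add_two]
  ring

lemma coeff_T_of_even {n : ℕ} (hn : Even n) : coeff n T = 0 := by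
  simp [T, Nat.even_iff.mp hn]

lemma coeff_T_of_odd {n : ℕ} (hn : Odd n) :
    coeff n T = 2 * ((5 * n)‼ : ℚ) / (n‼ : ℚ) ^ 5 := by
  simp [T, Nat.odd_iff.mp hn]

lemma coeff_T_add_two (n : ℕ) :
    ((n : ℚ) + 2) ^ 4 * coeff (n + 2) T =
      5 * (5 * n + 8) * (5 * n + 6) * (5 * n + 4) * (5 * n + 2) * coeff n T := by
  rcases Nat.even_or_odd n with hn | hn
  · simp [coeff_T_of_even hn, coeff_T_of_even (hn.add even_two)]
  · rw [coeff_T_of_odd hn, coeff_T_of_odd (hn.add_even even_two),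
      Nat.doubleFactorial_five_mul_add_two, Nat.doubleFactorial_add_two]
    have : (n‼ : ℚ) ≠ 0 := by exact_mod_cast (Nat.doubleFactorial_pos n).ne'
    push_cast
    field_simp
    ring

/-- `T` satisfies the inhomogeneous Picard–Fuchs equation
`θ⁴T − 5u²(5θ+1)(5θ+2)(5θ+3)(5θ+4)T = (15/8)·u`. -/
theorem T_satisfies_inhomogeneous_picard_fuchs :
    theta (theta (theta (theta T))) - 5 * PowerSeries.X ^ 2 * A 1 (A 2 (A 3 (A 4 T))) =
      PowerSeries.C (R := ℚ) (15 / 8) * PowerSeries.X := by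
  ext n
  rw [map_sub, mul_assoc, ← map_ofNat (C (R := ℚ)) 5, coeff_C_mul, coeff_X_pow_mul', coeff_C_mul,
    coeff_X]
  rcases n with _ | _ | n
  · simp [coeff_T_of_even ⟨0, rfl⟩]
  · norm_num [coeff_T_of_odd odd_one, Nat.doubleFactorial]
  · simp only [coeff_theta, coeff_A, Nat.cast_add, Nat.cast_one, le_add_iff_nonneg_left, zero_le,
      ↓reduceIte, Nat.reduceSubDiff, Nat.add_eq_right, Nat.add_eq_zero_iff, one_ne_zero, and_false,
      mul_zero]
    linear_combination (1 / 16 : ℚ) * coeff_T_add_two n
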